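/- Let a₁,…,a_n be distinct reals, ε₁,…,ε_n ∈ {-1,1}, Δᵢ(a) = εᵢ(a-aᵢ), let I ⊆ ℝ be an open interval on which Δᵢ > 0 for all i, let x(a) = ∑_{i=1}^n ξᵢ Δᵢ(a)^{-1/2} with ξᵢ ∈ ℝ, and for 1 ≤ k ≤ n set β_k(a) = ∑_{i=1}^n (ξᵢ / Δᵢ(a)^{1/2}) σ^i_{k-1}. Then on I: β₁ = x (hence β₁′ = x′); β_{k+1}′ = −a β_k′ − (1/2) β_k + σ_k x′ for 1 ≤ k ≤ n−1; and 0 = −a β_n′ − (1/2) β_n + σ_n x′. -/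

import Mathlib

open Polynomial

/-- For a polynomial `Q` of degree `d` written as `Q(X) = ∑_{k=0}^{d} (-1)^k σ_k X^{d-k}`,
`sig d Q k` is the coefficient `σ_k`, extended by `0` outside `0 ≤ k ≤ d`. -/
noncomputable def sig (d : ℕ) (Q : Polynomial ℝ) (k : ℤ) : ℝ :=
  if 0 ≤ k ∧ k ≤ (d : ℤ) then (-1 : ℝ) ^ k * Q.coeff (d - k.toNat) else 0

/-- `σ_k` for `P(X) = ∏ᵢ (X-aᵢ) = ∑_{k=0}^{n} (-1)^k σ_k X^{n-k}`. -/
noncomputable def sigma (n : ℕ) (a : Fin n → ℝ) (k : ℤ) : ℝ :=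
  sig n (∏ i, (X - C (a i))) k

/-- `σ^i_k` defined by `P(X)/(X-aᵢ) = ∑_{k=0}^{n-1} (-1)^k σ^i_k X^{n-1-k}`,
with `σ^i_{-1} = σ^i_n = 0`. -/
noncomputable def sigmaI (n : ℕ) (a : Fin n → ℝ) (i : Fin n) (k : ℤ) : ℝ :=
  sig (n - 1) (∏ j ∈ Finset.univ.erase i, (X - C (a j))) k

/-- The function `β_k(a) = ∑ᵢ (ξᵢ / Δᵢ(a)^{1/2}) σ^i_{k-1}`. -/
noncomputable def betak (n : ℕ) (a ε ξ : Fin n → ℝ) (k : ℕ) (t : ℝ) : ℝ :=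
  ∑ i, ξ i / (ε i * (t - a i)) ^ ((1/2) : ℝ) * sigmaI n a i ((k : ℤ) - 1)

/-- The function `x(a) = ∑ᵢ ξᵢ Δᵢ(a)^{-1/2}`. -/
noncomputable def xfun (n : ℕ) (a ε ξ : Fin n → ℝ) (t : ℝ) : ℝ :=
  ∑ i, ξ i * (ε i * (t - a i)) ^ (-(1/2) : ℝ)

/-!
`β_k` and `x` are linear combinations of the functions `Δᵢ^{-1/2}`, whose derivatives are
`-(εᵢ/2) Δᵢ^{-3/2}`. Since `Δᵢ^{-1/2} = Δᵢ · Δᵢ^{-3/2}` and `Δᵢ = εᵢ (a - aᵢ)`, the recurrence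
for `β_k` reduces, term by term, to `σ_k = σ^i_k + aᵢ σ^i_{k-1}`, which compares coefficients in
`P = (X - aᵢ) · P/(X - aᵢ)`. The recurrence holds for every `k ≥ 0`; the last identity is its
case `k = n`, where `β_{n+1} = 0` because `σ^i_n = 0`.
-/

open Finset

-- In the reversed polynomial `X^d Q(1/X)` the factor `X - c` becomes `1 - cX`.
lemma sig_eq_coeff_reflect {d : ℕ} {Q : ℝ[X]} (hQ : Q.natDegree ≤ d) (k : ℕ) :
    sig d Q k = (-1) ^ k * (reflect d Q).coeff k := by
  rw [sig, coeff_reflect]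
  split_ifs with hk
  · rw [revAt_le (by omega)]
    simp
  · rw [revAt_eq_self_of_lt (by omega), coeff_eq_zero_of_natDegree_lt (by omega), mul_zero]

lemma sig_X_sub_C_mul {d : ℕ} {Q : ℝ[X]} (hQ : Q.natDegree ≤ d) (c : ℝ) (k : ℕ) :
    sig (d + 1) ((X - C c) * Q) k = sig d Q k + c * sig d Q (k - 1) := by
  have hP : ((X - C c) * Q).natDegree ≤ d + 1 :=
    natDegree_mul_le.trans (by rw [natDegree_X_sub_C]; omega)
  have hreflect : reflect (d + 1) ((X - C c) * Q) = reflect d Q * (1 - C c * X) := by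
    rw [mul_comm, reflect_mul Q _ hQ (natDegree_X_sub_C c).le]
    simp [reflect_sub]
  rw [sig_eq_coeff_reflect hP, sig_eq_coeff_reflect hQ, hreflect]
  cases k with
  | zero => simp [sig]
  | succ m =>
    rw [Nat.cast_succ, add_sub_cancel_right, sig_eq_coeff_reflect hQ, mul_sub, mul_one,
      coeff_sub, ← mul_assoc, coeff_mul_X, mul_comm _ (C c), coeff_C_mul]
    ring

lemma sig_zero_of_monic {d : ℕ} {Q : ℝ[X]} (hQ : Q.Monic) (hd : Q.natDegree = d) :
    sig d Q 0 = 1 := by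
  simp [sig, ← hd, hQ.coeff_natDegree]

section
variable {n : ℕ} (a : Fin n → ℝ) (i : Fin n)

lemma natDegree_prod_erase_X_sub_C :
    (∏ j ∈ univ.erase i, (X - C (a j))).natDegree = n - 1 := by
  rw [natDegree_prod_of_monic _ _ fun j _ => monic_X_sub_C _]
  simp [card_erase_of_mem]

lemma sigma_eq_sigmaI_add (k : ℕ) :
    sigma n a k = sigmaI n a i k + a i * sigmaI n a i (k - 1) := by
  obtain ⟨m, rfl⟩ := Nat.exists_eq_add_one.mpr i.pos
  rw [sigma, sigmaI, ← mul_prod_erase univ _ (mem_univ i), Nat.add_sub_cancel]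
  exact sig_X_sub_C_mul (natDegree_prod_erase_X_sub_C a i).le _ _

lemma sigmaI_zero : sigmaI n a i 0 = 1 :=
  sig_zero_of_monic (monic_prod_of_monic _ _ fun _ _ => monic_X_sub_C _)
    (natDegree_prod_erase_X_sub_C a i)

lemma sigmaI_n_eq_zero : sigmaI n a i n = 0 := by
  rw [sigmaI, sig, if_neg (by have := i.pos; omega)]

end

lemma rpow_neg_half_eq_mul_rpow_neg_three_halves {x : ℝ} (hx : x ≠ 0) :
    x ^ (-(1/2) : ℝ) = x * x ^ (-(3/2) : ℝ) := by
  rw [mul_comm, ← Real.rpow_add_one hx]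
  norm_num

section
variable {n : ℕ} (a ε ξ : Fin n → ℝ)

lemma hasDerivAt_sum_mul_rpow_neg_half (c : Fin n → ℝ) {t : ℝ}
    (ht : ∀ i, ε i * (t - a i) ≠ 0) :
    HasDerivAt (fun s => ∑ i, c i * (ε i * (s - a i)) ^ (-(1/2) : ℝ))
      (∑ i, c i * (-(1/2) * ε i * (ε i * (t - a i)) ^ (-(3/2) : ℝ))) t := by
  refine HasDerivAt.fun_sum fun i _ => HasDerivAt.const_mul (c i) ?_
  refine ((((hasDerivAt_id' t).sub_const (a i)).const_mul (ε i)).rpow_const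
    (p := -(1/2)) (Or.inl (ht i))).congr_deriv ?_
  rw [show (-(1/2) : ℝ) - 1 = -(3/2) by norm_num]
  ring

lemma hasDerivAt_xfun {t : ℝ} (ht : ∀ i, ε i * (t - a i) ≠ 0) :
    HasDerivAt (xfun n a ε ξ)
      (∑ i, ξ i * (-(1/2) * ε i * (ε i * (t - a i)) ^ (-(3/2) : ℝ))) t :=
  hasDerivAt_sum_mul_rpow_neg_half a ε ξ ht

lemma betak_eq_sum_mul_rpow_neg_half (k : ℕ) {t : ℝ} (ht : ∀ i, 0 ≤ ε i * (t - a i)) :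
    betak n a ε ξ k t =
      ∑ i, ξ i * sigmaI n a i (k - 1) * (ε i * (t - a i)) ^ (-(1/2) : ℝ) := by
  refine sum_congr rfl fun i _ => ?_
  rw [Real.rpow_neg (ht i), div_eq_mul_inv]
  ring

lemma hasDerivAt_betak {I : Set ℝ} (hI : IsOpen I) (hΔ : ∀ i, ∀ t ∈ I, 0 < ε i * (t - a i))
    (k : ℕ) {t : ℝ} (ht : t ∈ I) :
    HasDerivAt (betak n a ε ξ k)
      (∑ i, ξ i * sigmaI n a i (k - 1) * (-(1/2) * ε i * (ε i * (t - a i)) ^ (-(3/2) : ℝ))) t := by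
  refine (hasDerivAt_sum_mul_rpow_neg_half a ε _ fun i => (hΔ i t ht).ne').congr_of_eventuallyEq ?_
  filter_upwards [hI.mem_nhds ht] with s hs
  exact betak_eq_sum_mul_rpow_neg_half a ε ξ k fun i => (hΔ i s hs).le

lemma betak_one_eq_xfun {t : ℝ} (ht : ∀ i, 0 ≤ ε i * (t - a i)) :
    betak n a ε ξ 1 t = xfun n a ε ξ t := by
  simp [betak_eq_sum_mul_rpow_neg_half a ε ξ 1 ht, sigmaI_zero, xfun]

lemma betak_n_succ_eq_zero : betak n a ε ξ (n + 1) = 0 := by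
  funext t
  simp [betak, sigmaI_n_eq_zero]

theorem deriv_betak_succ {I : Set ℝ} (hI : IsOpen I) (hΔ : ∀ i, ∀ t ∈ I, 0 < ε i * (t - a i))
    (k : ℕ) {t : ℝ} (ht : t ∈ I) :
    deriv (betak n a ε ξ (k + 1)) t =
      -t * deriv (betak n a ε ξ k) t - (1/2) * betak n a ε ξ k t +
        sigma n a k * deriv (xfun n a ε ξ) t := by
  have hΔt : ∀ i, 0 < ε i * (t - a i) := fun i => hΔ i t ht
  rw [(hasDerivAt_betak a ε ξ hI hΔ _ ht).deriv, (hasDerivAt_betak a ε ξ hI hΔ _ ht).deriv,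
    (hasDerivAt_xfun a ε ξ fun i => (hΔt i).ne').deriv,
    betak_eq_sum_mul_rpow_neg_half a ε ξ k fun i => (hΔt i).le]
  simp only [mul_sum, ← sum_sub_distrib, ← sum_add_distrib]
  refine sum_congr rfl fun i _ => ?_
  rw [rpow_neg_half_eq_mul_rpow_neg_three_halves (hΔt i).ne', sigma_eq_sigmaI_add a i k,
    Nat.cast_succ, add_sub_cancel_right]
  ring

end

theorem stmt8_general (n : ℕ) (a : Fin n → ℝ)
    (ε : Fin n → ℝ)
    (I : Set ℝ) (hIopen : IsOpen I)
    (hΔ : ∀ i, ∀ t ∈ I, 0 < ε i * (t - a i))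
    (ξ : Fin n → ℝ) :
    (∀ t ∈ I, betak n a ε ξ 1 t = xfun n a ε ξ t) ∧
    (∀ k : ℕ, 1 ≤ k → k + 1 ≤ n → ∀ t ∈ I,
      deriv (betak n a ε ξ (k + 1)) t =
        -t * deriv (betak n a ε ξ k) t - (1/2) * betak n a ε ξ k t +
          sigma n a (k : ℤ) * deriv (xfun n a ε ξ) t) ∧
    (∀ t ∈ I,
      0 = -t * deriv (betak n a ε ξ n) t - (1/2) * betak n a ε ξ n t +
          sigma n a (n : ℤ) * deriv (xfun n a ε ξ) t) := by
  refine ⟨fun t ht => betak_one_eq_xfun a ε ξ fun i => (hΔ i t ht).le,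
    fun k _ _ t ht => deriv_betak_succ a ε ξ hIopen hΔ k ht, fun t ht => ?_⟩
  rw [← deriv_betak_succ a ε ξ hIopen hΔ n ht, betak_n_succ_eq_zero, Pi.zero_def, deriv_const]

/-- On `I`: `β₁ = x`; `β_{k+1}′ = −a β_k′ − (1/2) β_k + σ_k x′` for
`1 ≤ k ≤ n−1`; and `0 = −a β_n′ − (1/2) β_n + σ_n x′`. -/
theorem stmt8 (n : ℕ) (hn : 1 ≤ n) (a : Fin n → ℝ) (ha : Function.Injective a)
    (ε : Fin n → ℝ) (hε : ∀ i, ε i = 1 ∨ ε i = -1)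
    (I : Set ℝ) (hIopen : IsOpen I) (hIconn : I.OrdConnected)
    (hΔ : ∀ i, ∀ t ∈ I, 0 < ε i * (t - a i))
    (ξ : Fin n → ℝ) :
    (∀ t ∈ I, betak n a ε ξ 1 t = xfun n a ε ξ t) ∧
    (∀ k : ℕ, 1 ≤ k → k + 1 ≤ n → ∀ t ∈ I,
      deriv (betak n a ε ξ (k + 1)) t =
        -t * deriv (betak n a ε ξ k) t - (1/2) * betak n a ε ξ k t +
          sigma n a (k : ℤ) * deriv (xfun n a ε ξ) t) ∧
    (∀ t ∈ I,
      0 = -t * deriv (betak n a ε ξ n) t - (1/2) * betak n a ε ξ n t +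
          sigma n a (n : ℤ) * deriv (xfun n a ε ξ) t) :=
  stmt8_general n a ε I hIopen hΔ ξ
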